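/- Let μ be a finite measure and γ a translation bounded measure on ℝ^d (both possibly signed). For f, g continuous with compact support, define f_μ(x) := ∫ f(x+z) dμ(z). Then (μ * μ̃ * γ)(f * g̃) = γ(f_μ * (g_μ)~), where g̃(x) = conj(g(−x)) and μ̃ is the measure with μ̃(h) = conj(μ(h̃)). -/

import Mathlib

open MeasureTheory Filter Topology
open scoped NNReal ENNReal

/-- Convolution of two measures on `ℝ^d`. -/
noncomputable def mconv {d : ℕ} (μ ν : Measure (EuclideanSpace ℝ (Fin d))) :
    Measure (EuclideanSpace ℝ (Fin d)) :=
  (μ.prod ν).map (fun p => p.1 + p.2)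

/-- The function convolution `(f * g̃)(x) = ∫ f(t) conj(g(t-x)) dt`. -/
noncomputable def fconvTilde {d : ℕ} (f g : EuclideanSpace ℝ (Fin d) → ℂ)
    (x : EuclideanSpace ℝ (Fin d)) : ℂ :=
  ∫ t, f t * (starRingEnd ℂ) (g (t - x)) ∂volume

/-- `f_μ(x) = ∫ f(x+z) dμ(z)` for the signed measure `μ = μp - μn`. -/
noncomputable def smear {d : ℕ} (μp μn : Measure (EuclideanSpace ℝ (Fin d)))
    (f : EuclideanSpace ℝ (Fin d) → ℂ) (x : EuclideanSpace ℝ (Fin d)) : ℂ :=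
  (∫ z, f (x + z) ∂μp) - ∫ z, f (x + z) ∂μn

/-!
Splitting `μ = μp - μn` and `γ = γp - γn`, both sides are sesquilinear in the positive parts, so
it suffices to take `μ, μ'` finite and `γ` translation bounded, all positive. Then Fubini and the
translation invariance of Lebesgue measure give the pointwise identity
`(f_μ ⋆ (g_μ')~)(x) = ∫ (f ⋆ g̃)(x + a) d(μ * μ̃')(a)`, and integrating it against `γ` is
integrating `f ⋆ g̃` against `(μ * μ̃') * γ`. Translation boundedness of `γ` is what makes
`(a, x) ↦ (f ⋆ g̃)(a + x)` integrable for `ν × γ` with `ν` finite, since `f ⋆ g̃` is continuous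
with compact support.
-/

section

variable {d : ℕ}

local notation "E" => EuclideanSpace ℝ (Fin d)

def IsTranslationBounded (γ : Measure E) : Prop :=
  ∀ K : Set E, IsCompact K → ∃ C : ℝ≥0, ∀ t, γ ((fun x => t + x) '' K) ≤ C

/-- `f_μ` for a positive measure `μ`, so that `smear μp μn f = translAvg μp f - translAvg μn f`. -/
noncomputable def translAvg (μ : Measure E) (f : E → ℂ) (x : E) : ℂ :=
  ∫ z, f (x + z) ∂μ

instance (μ ν : Measure E) [IsFiniteMeasure μ] [IsFiniteMeasure ν] :
    IsFiniteMeasure (mconv μ ν) := by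
  unfold mconv; infer_instance

lemma mconv_map_neg (μ ν : Measure E) [SFinite μ] [SFinite ν] :
    mconv μ (ν.map Neg.neg) = (μ.prod ν).map (fun p => p.1 - p.2) := by
  rw [mconv, ← Measure.map_id (μ := μ), Measure.map_prod_map _ _ measurable_id measurable_neg,
    Measure.map_map measurable_add (measurable_id.prodMap measurable_neg), Measure.map_id]
  rfl

lemma IsTranslationBounded.isFiniteMeasureOnCompacts {γ : Measure E}
    (hγ : IsTranslationBounded γ) : IsFiniteMeasureOnCompacts γ := by
  refine ⟨fun K hK => ?_⟩
  obtain ⟨C, hC⟩ := hγ K hK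
  simpa using (hC 0).trans_lt ENNReal.coe_lt_top

lemma IsTranslationBounded.exists_lintegral_enorm_comp_add_le {γ : Measure E}
    (hγ : IsTranslationBounded γ) {F : E → ℂ} (hFc : Continuous F)
    (hFs : HasCompactSupport F) :
    ∃ D : ℝ≥0∞, D < ∞ ∧ ∀ a, ∫⁻ x, ‖F (a + x)‖ₑ ∂γ ≤ D := by
  obtain ⟨C, hC⟩ := hγ _ hFs
  obtain ⟨M, hM⟩ := hFs.exists_bound_of_continuous hFc
  refine ⟨ENNReal.ofReal M * C, ENNReal.mul_lt_top ENNReal.ofReal_lt_top ENNReal.coe_lt_top,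
    fun a => ?_⟩
  set S := (fun x => -a + x) '' tsupport F
  have hsupp : Function.support (fun x => ‖F (a + x)‖ₑ) ⊆ S := fun x hx =>
    ⟨a + x, subset_tsupport _ (by simpa using hx), by simp⟩
  calc ∫⁻ x, ‖F (a + x)‖ₑ ∂γ = ∫⁻ x in S, ‖F (a + x)‖ₑ ∂γ :=
        (setLIntegral_eq_of_support_subset hsupp).symm
    _ ≤ ∫⁻ _ in S, ENNReal.ofReal M ∂γ := lintegral_mono fun x => by
        rw [← ofReal_norm]; exact ENNReal.ofReal_le_ofReal (hM _)
    _ = ENNReal.ofReal M * γ S := setLIntegral_const _ _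
    _ ≤ ENNReal.ofReal M * C := by gcongr; exact hC (-a)

lemma IsTranslationBounded.integrable_comp_add_prod {γ : Measure E} (hγ : IsTranslationBounded γ)
    (ν : Measure E) [IsFiniteMeasure ν] {F : E → ℂ} (hFc : Continuous F)
    (hFs : HasCompactSupport F) :
    Integrable (fun p : E × E => F (p.1 + p.2)) (ν.prod γ) := by
  have := hγ.isFiniteMeasureOnCompacts
  obtain ⟨D, hD_lt, hD⟩ := hγ.exists_lintegral_enorm_comp_add_le hFc hFs
  have hm : AEStronglyMeasurable (fun p : E × E => F (p.1 + p.2)) (ν.prod γ) :=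
    (hFc.comp continuous_add).aestronglyMeasurable
  refine ⟨hm, ?_⟩
  calc ∫⁻ p, ‖F (p.1 + p.2)‖ₑ ∂(ν.prod γ) = ∫⁻ a, ∫⁻ x, ‖F (a + x)‖ₑ ∂γ ∂ν :=
        lintegral_prod _ hm.enorm
    _ ≤ ∫⁻ _, D ∂ν := lintegral_mono hD
    _ < ∞ := by rw [lintegral_const]; exact ENNReal.mul_lt_top hD_lt (measure_lt_top _ _)

lemma IsTranslationBounded.integrable_mconv {γ : Measure E} (hγ : IsTranslationBounded γ)
    (ν : Measure E) [IsFiniteMeasure ν] {F : E → ℂ} (hFc : Continuous F)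
    (hFs : HasCompactSupport F) : Integrable F (mconv ν γ) :=
  (integrable_map_measure hFc.aestronglyMeasurable measurable_add.aemeasurable).2
    (hγ.integrable_comp_add_prod ν hFc hFs)

lemma IsTranslationBounded.integral_mconv {γ : Measure E} (hγ : IsTranslationBounded γ)
    (ν : Measure E) [IsFiniteMeasure ν] {F : E → ℂ} (hFc : Continuous F)
    (hFs : HasCompactSupport F) : ∫ x, F x ∂(mconv ν γ) = ∫ x, translAvg ν F x ∂γ := by
  have := hγ.isFiniteMeasureOnCompacts
  rw [mconv, integral_map measurable_add.aemeasurable hFc.aestronglyMeasurable,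
    integral_prod_symm _ (hγ.integrable_comp_add_prod ν hFc hFs)]
  simp only [translAvg, add_comm]

lemma IsTranslationBounded.integrable_translAvg {γ : Measure E} (hγ : IsTranslationBounded γ)
    (ν : Measure E) [IsFiniteMeasure ν] {F : E → ℂ} (hFc : Continuous F)
    (hFs : HasCompactSupport F) : Integrable (translAvg ν F) γ := by
  have := hγ.isFiniteMeasureOnCompacts
  refine (hγ.integrable_comp_add_prod ν hFc hFs).integral_prod_right.congr
    (ae_of_all _ fun x => ?_)
  simp only [translAvg, add_comm]

lemma integrable_comp_fst_add_prod {β : Type*} [MeasurableSpace β] (ρ : Measure β)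
    [IsFiniteMeasure ρ] {φ : β → E} (hφ : Measurable φ) {f : E → ℂ} (hfc : Continuous f)
    (hfi : Integrable f) : Integrable (fun q : E × β => f (q.1 + φ q.2)) (volume.prod ρ) := by
  have hm : AEStronglyMeasurable (fun q : E × β => f (q.1 + φ q.2)) (volume.prod ρ) :=
    (hfc.measurable.comp (measurable_fst.add (hφ.comp measurable_snd))).aestronglyMeasurable
  refine (integrable_prod_iff' hm).2 ⟨ae_of_all _ fun b => hfi.comp_add_right (φ b), ?_⟩
  simp only [integral_add_right_eq_self (fun t => ‖f t‖)]
  exact integrable_const _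

lemma MeasureTheory.Integrable.translAvg {f : E → ℂ} (hfi : Integrable f) (hfc : Continuous f)
    (μ : Measure E) [IsFiniteMeasure μ] : Integrable (translAvg μ f) :=
  (integrable_comp_fst_add_prod μ measurable_id hfc hfi).integral_prod_left

lemma stronglyMeasurable_translAvg (μ : Measure E) [SFinite μ] {g : E → ℂ} (hgc : Continuous g) :
    StronglyMeasurable (translAvg μ g) :=
  (hgc.comp continuous_add).stronglyMeasurable.integral_prod_right'

lemma norm_translAvg_le (μ : Measure E) [IsFiniteMeasure μ] {g : E → ℂ} {C : ℝ}
    (hgb : ∀ y, ‖g y‖ ≤ C) (x : E) : ‖translAvg μ g x‖ ≤ C * μ.real Set.univ :=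
  norm_integral_le_of_norm_le_const (ae_of_all _ fun _ => hgb _)

lemma translAvg_add_measure (ν₁ ν₂ : Measure E) [IsFiniteMeasure ν₁] [IsFiniteMeasure ν₂]
    {F : E → ℂ} (hFc : Continuous F) {C : ℝ} (hFb : ∀ y, ‖F y‖ ≤ C) (x : E) :
    translAvg (ν₁ + ν₂) F x = translAvg ν₁ F x + translAvg ν₂ F x := by
  have hint : ∀ ν : Measure E, [IsFiniteMeasure ν] → Integrable (fun a => F (x + a)) ν :=
    fun ν _ => .of_bound (hFc.comp (continuous_const_add x)).aestronglyMeasurable C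
      (ae_of_all _ fun _ => hFb _)
  exact integral_add_measure (hint ν₁) (hint ν₂)

lemma integrable_mul_conj_comp_sub {μ : Measure E} {f g : E → ℂ} (hfi : Integrable f μ)
    (hg : StronglyMeasurable g) {C : ℝ} (hgb : ∀ y, ‖g y‖ ≤ C) (x : E) :
    Integrable (fun t => f t * starRingEnd ℂ (g (t - x))) μ :=
  hfi.mul_bdd (Complex.continuous_conj.comp_stronglyMeasurable
      (hg.comp_measurable (measurable_sub_const x))).aestronglyMeasurable
    (ae_of_all _ fun t => by rw [RCLike.norm_conj]; exact hgb _)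

lemma fconvTilde_sub_sub {f₁ f₂ g₁ g₂ : E → ℂ} (hf₁ : Integrable f₁) (hf₂ : Integrable f₂)
    (hg₁ : StronglyMeasurable g₁) (hg₂ : StronglyMeasurable g₂) {C₁ C₂ : ℝ}
    (hb₁ : ∀ y, ‖g₁ y‖ ≤ C₁) (hb₂ : ∀ y, ‖g₂ y‖ ≤ C₂) (x : E) :
    fconvTilde (f₁ - f₂) (g₁ - g₂) x
      = fconvTilde f₁ g₁ x - fconvTilde f₁ g₂ x - (fconvTilde f₂ g₁ x - fconvTilde f₂ g₂ x) := by
  have h₁₁ := integrable_mul_conj_comp_sub hf₁ hg₁ hb₁ x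
  have h₁₂ := integrable_mul_conj_comp_sub hf₁ hg₂ hb₂ x
  have h₂₁ := integrable_mul_conj_comp_sub hf₂ hg₁ hb₁ x
  have h₂₂ := integrable_mul_conj_comp_sub hf₂ hg₂ hb₂ x
  simp only [fconvTilde, Pi.sub_apply, map_sub, mul_sub, sub_mul]
  rw [integral_sub (h₁₁.sub' h₂₁) (h₁₂.sub' h₂₂), integral_sub h₁₁ h₂₁, integral_sub h₁₂ h₂₂]
  ring

lemma fconvTilde_eq_convolution (f g : E → ℂ) :
    fconvTilde f g
      = convolution f (fun u => starRingEnd ℂ (g (-u))) (ContinuousLinearMap.mul ℂ ℂ) volume := by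
  ext x
  simp [fconvTilde, convolution_def]

lemma continuous_fconvTilde {f g : E → ℂ} (hfc : Continuous f) (hfs : HasCompactSupport f)
    (hgc : Continuous g) (hgs : HasCompactSupport g) : Continuous (fconvTilde f g) := by
  rw [fconvTilde_eq_convolution]
  exact HasCompactSupport.continuous_convolution_right _
    ((hgs.comp_homeomorph (Homeomorph.neg E)).comp_left (map_zero _))
    (hfc.integrable_of_hasCompactSupport hfs).locallyIntegrable
    (Complex.continuous_conj.comp (hgc.comp continuous_neg))

lemma hasCompactSupport_fconvTilde {f g : E → ℂ} (hfs : HasCompactSupport f)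
    (hgs : HasCompactSupport g) : HasCompactSupport (fconvTilde f g) := by
  rw [fconvTilde_eq_convolution]
  exact hfs.convolution _ ((hgs.comp_homeomorph (Homeomorph.neg E)).comp_left (map_zero _))

lemma stronglyMeasurable_fconvTilde {f g : E → ℂ} (hfc : Continuous f) (hgc : Continuous g) :
    StronglyMeasurable (fconvTilde f g) :=
  StronglyMeasurable.integral_prod_right'
    (f := fun q : E × E => f q.2 * starRingEnd ℂ (g (q.2 - q.1)))
    (by fun_prop : Continuous _).stronglyMeasurable

lemma integral_comp_add_mul_conj_eq_fconvTilde (f g : E → ℂ) (x z w : E) :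
    ∫ t, f (t + z) * starRingEnd ℂ (g (t - x + w)) = fconvTilde f g (x + (z - w)) := by
  rw [fconvTilde,
    ← integral_add_right_eq_self (fun t => f t * starRingEnd ℂ (g (t - (x + (z - w))))) z]
  congr with t
  congr 3
  abel

lemma fconvTilde_translAvg_translAvg (μ μ' : Measure E) [IsFiniteMeasure μ] [IsFiniteMeasure μ']
    {f g : E → ℂ} (hfc : Continuous f) (hfi : Integrable f) (hgc : Continuous g) {C : ℝ}
    (hgb : ∀ y, ‖g y‖ ≤ C) (x : E) :
    fconvTilde (translAvg μ f) (translAvg μ' g) x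
      = translAvg (mconv μ (μ'.map Neg.neg)) (fconvTilde f g) x := by
  have hint : Integrable (Function.uncurry fun (t : E) (p : E × E) =>
      f (t + p.1) * starRingEnd ℂ (g (t - x + p.2))) (volume.prod (μ.prod μ')) :=
    (integrable_comp_fst_add_prod (μ.prod μ') measurable_fst hfc hfi).mul_bdd
      (by fun_prop : Continuous _).aestronglyMeasurable
      (ae_of_all _ fun q => by rw [RCLike.norm_conj]; exact hgb _)
  calc fconvTilde (translAvg μ f) (translAvg μ' g) x
      = ∫ t, ∫ p, f (t + p.1) * starRingEnd ℂ (g (t - x + p.2)) ∂(μ.prod μ') := by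
        simp only [fconvTilde, translAvg]
        congr 1 with t
        rw [← integral_conj, ← integral_prod_mul]
    _ = ∫ p, ∫ t, f (t + p.1) * starRingEnd ℂ (g (t - x + p.2)) ∂volume ∂(μ.prod μ') :=
        integral_integral_swap hint
    _ = ∫ p, fconvTilde f g (x + (p.1 - p.2)) ∂(μ.prod μ') := by
        simp only [integral_comp_add_mul_conj_eq_fconvTilde]
    _ = translAvg (mconv μ (μ'.map Neg.neg)) (fconvTilde f g) x := by
        have hF : AEStronglyMeasurable (fun a => fconvTilde f g (x + a))
            ((μ.prod μ').map fun p : E × E => p.1 - p.2) :=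
          ((stronglyMeasurable_fconvTilde hfc hgc).comp_measurable
            (measurable_const_add x)).aestronglyMeasurable
        rw [translAvg, mconv_map_neg, integral_map (by fun_prop) hF]

lemma fconvTilde_smear_smear (μp μn : Measure E)
    [IsFiniteMeasure μp] [IsFiniteMeasure μn] {f g : E → ℂ}
    (hfc : Continuous f) (hfs : HasCompactSupport f)
    (hgc : Continuous g) (hgs : HasCompactSupport g) (x : E) :
    fconvTilde (smear μp μn f) (smear μp μn g) x
      = translAvg (mconv μp (μp.map Neg.neg) + mconv μn (μn.map Neg.neg)) (fconvTilde f g) x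
        - translAvg (mconv μp (μn.map Neg.neg) + mconv μn (μp.map Neg.neg)) (fconvTilde f g) x := by
  have hfi : Integrable f := hfc.integrable_of_hasCompactSupport hfs
  obtain ⟨Cg, hgb⟩ := hgs.exists_bound_of_continuous hgc
  obtain ⟨CF, hFb⟩ := (hasCompactSupport_fconvTilde hfs hgs).exists_bound_of_continuous
    (continuous_fconvTilde hfc hfs hgc hgs)
  have hsmear : ∀ h, smear μp μn h = translAvg μp h - translAvg μn h := fun _ => rfl
  rw [hsmear, hsmear, fconvTilde_sub_sub (hfi.translAvg hfc μp) (hfi.translAvg hfc μn)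
      (stronglyMeasurable_translAvg μp hgc) (stronglyMeasurable_translAvg μn hgc)
      (norm_translAvg_le μp hgb) (norm_translAvg_le μn hgb),
    translAvg_add_measure _ _ (continuous_fconvTilde hfc hfs hgc hgs) hFb,
    translAvg_add_measure _ _ (continuous_fconvTilde hfc hfs hgc hgs) hFb]
  simp only [fconvTilde_translAvg_translAvg _ _ hfc hfi hgc hgb]
  ring

end

theorem signed_convolution_trick
    (d : ℕ) (μp μn γp γn : Measure (EuclideanSpace ℝ (Fin d)))
    [IsFiniteMeasure μp] [IsFiniteMeasure μn]
    (hγp : ∀ K : Set (EuclideanSpace ℝ (Fin d)), IsCompact K → ∃ C : ℝ≥0,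
      ∀ t, γp ((fun x => t + x) '' K) ≤ C)
    (hγn : ∀ K : Set (EuclideanSpace ℝ (Fin d)), IsCompact K → ∃ C : ℝ≥0,
      ∀ t, γn ((fun x => t + x) '' K) ≤ C)
    (f g : EuclideanSpace ℝ (Fin d) → ℂ)
    (hfc : Continuous f) (hfs : HasCompactSupport f)
    (hgc : Continuous g) (hgs : HasCompactSupport g) :
    -- `μ = μp - μn`, `μ̃ = (μp.map Neg.neg) - (μn.map Neg.neg)`,
    -- `γ = γp - γn`; the identity `(μ * μ̃ * γ)(f * g̃) = γ(f_μ * (g_μ)~)`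
    -- written out in terms of the positive and negative parts:
    ((∫ x, fconvTilde f g x
        ∂(mconv (mconv μp (μp.map Neg.neg) + mconv μn (μn.map Neg.neg)) γp
          + mconv (mconv μp (μn.map Neg.neg) + mconv μn (μp.map Neg.neg)) γn))
      - ∫ x, fconvTilde f g x
        ∂(mconv (mconv μp (μp.map Neg.neg) + mconv μn (μn.map Neg.neg)) γn
          + mconv (mconv μp (μn.map Neg.neg) + mconv μn (μp.map Neg.neg)) γp))
    = (∫ x, fconvTilde (smear μp μn f) (smear μp μn g) x ∂γp)
      - ∫ x, fconvTilde (smear μp μn f) (smear μp μn g) x ∂γn := by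
  have hγp' : IsTranslationBounded γp := hγp
  have hγn' : IsTranslationBounded γn := hγn
  have hFc := continuous_fconvTilde hfc hfs hgc hgs
  have hFs := hasCompactSupport_fconvTilde hfs hgs
  set νp := mconv μp (μp.map Neg.neg) + mconv μn (μn.map Neg.neg)
  set νn := mconv μp (μn.map Neg.neg) + mconv μn (μp.map Neg.neg)
  simp only [fconvTilde_smear_smear μp μn hfc hfs hgc hgs]
  rw [integral_add_measure (hγp'.integrable_mconv νp hFc hFs) (hγn'.integrable_mconv νn hFc hFs),
    integral_add_measure (hγn'.integrable_mconv νp hFc hFs) (hγp'.integrable_mconv νn hFc hFs),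
    hγp'.integral_mconv νp hFc hFs, hγp'.integral_mconv νn hFc hFs,
    hγn'.integral_mconv νp hFc hFs, hγn'.integral_mconv νn hFc hFs,
    integral_sub (hγp'.integrable_translAvg νp hFc hFs) (hγp'.integrable_translAvg νn hFc hFs),
    integral_sub (hγn'.integrable_translAvg νp hFc hFs) (hγn'.integrable_translAvg νn hFc hFs)]
  ring
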